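/- With the SSM construction of the Moore machine (A = I, B with columns e_{T(s,σ)} − e_s, C with C_{λ,s} = [G(s)=λ], initial state x₀ = e_{s₀}, and inputs μ_t = e_{(q_t, σ_{t+1})}), the output y_t = C x_t equals the one-hot encoding of the Moore machine output G(q_t) for every t, i.e., the SSM exactly reproduces the input-output behavior of the Moore machine on every finite input word. -/

import Mathlib

/-!
Every input `μ_t` is a one-hot vector, so `B μ_t` is the column of `B` at `(q_t, σ_{t+1})`,
namely `e_{q_{t+1}} - e_{q_t}`. With `A = I` the recurrence therefore keeps the invariant
`x_t = e_{q_t}`, and `C e_q` is the column of `C` at `q`, which is `e_{G q}`.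
-/

def mooreB {S Γ : Type*} [Fintype S] [Fintype Γ] [DecidableEq S] [DecidableEq Γ]
    (T : S × Γ → S) : Matrix S (S × Γ) ℝ :=
  Matrix.of fun s'' p => (Pi.single (T p) 1 - Pi.single p.1 1 : S → ℝ) s''

def mooreC {S Λ : Type*} [Fintype S] [Fintype Λ] [DecidableEq S] [DecidableEq Λ]
    (G : S → Λ) : Matrix Λ S ℝ :=
  Matrix.of fun l s => if G s = l then (1 : ℝ) else 0

def Tstar {S Γ : Type*} (T : S × Γ → S) (s : S) (w : List Γ) : S :=
  w.foldl (fun q σ => T (q, σ)) s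

theorem Tstar_nil {S Γ : Type*} (T : S × Γ → S) (s : S) : Tstar T s [] = s := rfl

theorem Tstar_take_add_one {S Γ : Type*} (T : S × Γ → S) (s : S) (w : List Γ) {t : ℕ}
    (h : t < w.length) :
    Tstar T s (w.take (t + 1)) = T (Tstar T s (w.take t), w.get ⟨t, h⟩) := by
  rw [Tstar, List.take_add_one, List.foldl_append, List.getElem?_eq_getElem h]
  rfl

theorem mooreB_mulVec_single {S Γ : Type*} [Fintype S] [Fintype Γ] [DecidableEq S]
    [DecidableEq Γ] (T : S × Γ → S) (p : S × Γ) :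
    (mooreB T).mulVec (Pi.single p 1) = Pi.single (T p) 1 - Pi.single p.1 1 := by
  rw [Matrix.mulVec_single_one]
  rfl

theorem mooreC_mulVec_single {S Λ : Type*} [Fintype S] [Fintype Λ] [DecidableEq S]
    [DecidableEq Λ] (G : S → Λ) (s : S) :
    (mooreC G).mulVec (Pi.single s 1) = Pi.single (G s) 1 := by
  rw [Matrix.mulVec_single_one]
  ext l
  simp [mooreC, Pi.single_apply, eq_comm]

theorem mooreSSM_state_eq_single {S Γ : Type*} [Fintype S] [Fintype Γ]
    [DecidableEq S] [DecidableEq Γ] (T : S × Γ → S) (s₀ : S) (w : List Γ) (x : ℕ → (S → ℝ))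
    (hx0 : x 0 = Pi.single s₀ 1)
    (hstep : ∀ t (h : t < w.length),
      x (t + 1) = (1 : Matrix S S ℝ).mulVec (x t)
        + (mooreB T).mulVec (Pi.single (Tstar T s₀ (w.take t), w.get ⟨t, h⟩) 1)) :
    ∀ t ≤ w.length, x t = Pi.single (Tstar T s₀ (w.take t)) 1
  | 0, _ => by rw [hx0, List.take_zero, Tstar_nil]
  | t + 1, ht => by
    have hlt : t < w.length := ht
    rw [hstep t hlt, mooreSSM_state_eq_single T s₀ w x hx0 hstep t hlt.le, Matrix.one_mulVec,
      mooreB_mulVec_single, Tstar_take_add_one T s₀ w hlt, add_sub_cancel]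

/-- The SSM output `y_t = C x_t` equals the one-hot encoding of the Moore output
`G(q_t)` at every step `t` of every finite input word. -/
theorem stmt_3 {S Γ Λ : Type*} [Fintype S] [Fintype Γ] [Fintype Λ]
    [DecidableEq S] [DecidableEq Γ] [DecidableEq Λ]
    (T : S × Γ → S) (G : S → Λ) (s₀ : S) (w : List Γ) (x : ℕ → (S → ℝ))
    (hx0 : x 0 = Pi.single s₀ 1)
    (hstep : ∀ t (h : t < w.length),
      x (t + 1) = (1 : Matrix S S ℝ).mulVec (x t)
        + (mooreB T).mulVec (Pi.single (Tstar T s₀ (w.take t), w.get ⟨t, h⟩) 1)) :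
    ∀ t ≤ w.length,
      (mooreC G).mulVec (x t) = Pi.single (G (Tstar T s₀ (w.take t))) 1 := by
  intro t ht
  rw [mooreSSM_state_eq_single T s₀ w x hx0 hstep t ht, mooreC_mulVec_single]
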